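/- arXiv:1710.08991 — 2 statements merged into one kernel-verified Lean document; each statement's English description precedes it below -/
import Mathlib

section
/- Let Γ ≥ 1, let K̂¹, …, K̂^Γ, p₁, π₁, …, π_Γ be real numbers, and let M_MFC be the Γ×Γ real matrix with entries (M_MFC)_{ij} = K̂^i·δ_{ij} + 2p₁π_j. Let Ĥ be the Γ×Γ real matrix with diagonal entries Ĥ_{ll} = ∏_{j≠l} K̂^j + ∑_{j≠l} 2p₁π_j · ∏_{i≠l, i≠j} K̂^i and off-diagonal entries Ĥ_{lm} = −2p₁π_m · ∏_{j≠l, j≠m} K̂^j for l ≠ m. Then M_MFC · Ĥ = (det M_MFC) · I_Γ; in particular, if det M_MFC ≠ 0 then M_MFC⁻¹ = (1/det M_MFC) · Ĥ. -/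
open Finset

/-!
Write `M = diagonal K + replicateRow w` (every row of the rank-one part equals `w`) and
`P l = ∏_{i ≠ l} K i`. Since the off-diagonal part of `Ĥ` is symmetric in the two erased indices,
`w ᵥ* Ĥ = (w m * P m)_m`, and then row `l` of `M * Ĥ` is `K l * Ĥ l m + w m * P m`, which is
`∏ K + ∑ w j * P j` on the diagonal and cancels off it. That this scalar is `det M` is the matrix
determinant lemma when every `K i` is invertible, and follows for arbitrary real `K` by continuity.
-/

namespace Matrix

variable {ι : Type*} [Fintype ι] [DecidableEq ι]

section CommRing

variable {R : Type*} [CommRing R]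

/-- The matrix `Ĥ_MFC` of the paper; it is the adjugate of `diagonal K + replicateRow ι w`. -/
def mfcCofactor (K w : ι → R) : Matrix ι ι R :=
  of fun l m =>
    if l = m then
      (∏ j ∈ univ.erase l, K j) + ∑ j ∈ univ.erase l, w j * ∏ i ∈ (univ.erase l).erase j, K i
    else
      -w m * ∏ j ∈ (univ.erase l).erase m, K j

theorem vecMul_mfcCofactor (K w : ι → R) (m : ι) :
    (w ᵥ* mfcCofactor K w) m = w m * ∏ i ∈ univ.erase m, K i := by
  have off_diagonal : ∑ k ∈ univ.erase m, w k * mfcCofactor K w k m =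
      -(w m * ∑ k ∈ univ.erase m, w k * ∏ i ∈ (univ.erase m).erase k, K i) := by
    rw [mul_sum, ← sum_neg_distrib]
    refine sum_congr rfl fun k hk => ?_
    rw [mfcCofactor, of_apply, if_neg (ne_of_mem_erase hk), erase_right_comm]
    ring
  rw [vecMul, dotProduct, ← add_sum_erase _ _ (mem_univ m), off_diagonal, mfcCofactor, of_apply,
    if_pos rfl]
  ring

theorem diagonal_add_replicateRow_mul_mfcCofactor (K w : ι → R) :
    (diagonal K + replicateRow ι w) * mfcCofactor K w =
      ((∏ i, K i) + ∑ j, w j * ∏ i ∈ univ.erase j, K i) • (1 : Matrix ι ι R) := by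
  ext l m
  have row_l : ((diagonal K + replicateRow ι w) * mfcCofactor K w) l m =
      K l * mfcCofactor K w l m + w m * ∏ i ∈ univ.erase m, K i := by
    rw [add_mul, add_apply, diagonal_mul, ← vecMul_mfcCofactor]
    rfl
  rw [row_l, smul_apply, one_apply, smul_eq_mul, mfcCofactor, of_apply]
  split_ifs with hlm
  · subst hlm
    have absorb : ∀ j ∈ univ.erase l,
        K l * (w j * ∏ i ∈ (univ.erase l).erase j, K i) = w j * ∏ i ∈ univ.erase j, K i := by
      intro j hj
      rw [mul_left_comm, erase_right_comm,
        mul_prod_erase _ K (mem_erase.2 ⟨ne_of_mem_erase hj |>.symm, mem_univ l⟩)]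
    rw [mul_add, mul_prod_erase _ K (mem_univ l), mul_sum, sum_congr rfl absorb,
      ← add_sum_erase _ _ (mem_univ l)]
    ring
  · rw [mul_left_comm, erase_right_comm, mul_prod_erase _ K (mem_erase.2 ⟨hlm, mem_univ l⟩)]
    ring

end CommRing

theorem det_diagonal_add_replicateRow_of_ne_zero {𝕜 : Type*} [Field 𝕜] (K w : ι → 𝕜)
    (hK : ∀ i, K i ≠ 0) :
    (diagonal K + replicateRow ι w).det = (∏ i, K i) + ∑ j, w j * ∏ i ∈ univ.erase j, K i := by
  have factor : diagonal K + replicateRow ι w =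
      diagonal K * (1 + replicateCol Unit K⁻¹ * replicateRow Unit w) := by
    ext i j
    rw [diagonal_mul]
    simp [mul_add, diagonal_apply, one_apply, mul_apply, hK i]
  rw [factor, det_mul, det_one_add_replicateCol_mul_replicateRow, det_diagonal, mul_add, mul_one,
    dotProduct, mul_sum]
  congr 1
  refine sum_congr rfl fun j _ => ?_
  rw [← mul_prod_erase _ K (mem_univ j), Pi.inv_apply]
  field_simp [hK j]

theorem det_diagonal_add_replicateRow (K w : ι → ℝ) :
    (diagonal K + replicateRow ι w).det = (∏ i, K i) + ∑ j, w j * ∏ i ∈ univ.erase j, K i := by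
  suffices shifted : (fun t : ℝ => (diagonal (fun i => K i + t) + replicateRow ι w).det) =
      fun t => (∏ i, (K i + t)) + ∑ j, w j * ∏ i ∈ univ.erase j, (K i + t) by
    simpa using congrFun shifted 0
  have generic : Dense {t : ℝ | ∀ i, K i + t ≠ 0} := by
    refine ((Set.finite_range fun i => -K i).countable.dense_compl ℝ).mono ?_
    intro t ht i hi
    exact ht ⟨i, by linarith⟩
  refine Continuous.ext_on generic ?_ (by fun_prop) fun t ht =>
    det_diagonal_add_replicateRow_of_ne_zero _ w ht
  refine Continuous.matrix_det (continuous_matrix fun i j => ?_)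
  by_cases h : i = j <;> simp [h] <;> fun_prop

end Matrix

open Matrix in
theorem stmt_5_general (Γ : ℕ) (K : Fin Γ → ℝ) (p₁ : ℝ) (π : Fin Γ → ℝ)
    (M H : Matrix (Fin Γ) (Fin Γ) ℝ)
    (hM : ∀ i j, M i j = (if i = j then K i else 0) + 2 * p₁ * π j)
    (hH : ∀ l m, H l m =
      if l = m then
        (∏ j ∈ univ.erase l, K j)
          + ∑ j ∈ univ.erase l, (2 * p₁ * π j) * ∏ i ∈ (univ.erase l).erase j, K i
      else
        -(2 * p₁ * π m) * ∏ j ∈ (univ.erase l).erase m, K j) :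
    M * H = M.det • (1 : Matrix (Fin Γ) (Fin Γ) ℝ) ∧
    (M.det ≠ 0 → M⁻¹ = (M.det)⁻¹ • H) := by
  have hM' : M = diagonal K + replicateRow (Fin Γ) (fun j => 2 * p₁ * π j) := by
    ext i j
    simp [hM, diagonal_apply]
  have hH' : H = mfcCofactor K (fun j => 2 * p₁ * π j) := by
    ext l m
    rw [hH, mfcCofactor, of_apply]
  have adjugate_identity : M * H = M.det • (1 : Matrix (Fin Γ) (Fin Γ) ℝ) := by
    rw [hM', hH', det_diagonal_add_replicateRow, diagonal_add_replicateRow_mul_mfcCofactor]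
  refine ⟨adjugate_identity, fun hdet => inv_eq_right_inv ?_⟩
  rw [Matrix.mul_smul, adjugate_identity, smul_smul, inv_mul_cancel₀ hdet, one_smul]

theorem stmt_5 (Γ : ℕ) (hΓ : 1 ≤ Γ) (K : Fin Γ → ℝ) (p₁ : ℝ) (π : Fin Γ → ℝ)
    (M H : Matrix (Fin Γ) (Fin Γ) ℝ)
    (hM : ∀ i j, M i j = (if i = j then K i else 0) + 2 * p₁ * π j)
    (hH : ∀ l m, H l m =
      if l = m then
        (∏ j ∈ univ.erase l, K j)
          + ∑ j ∈ univ.erase l, (2 * p₁ * π j) * ∏ i ∈ (univ.erase l).erase j, K i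
      else
        -(2 * p₁ * π m) * ∏ j ∈ (univ.erase l).erase m, K j) :
    M * H = M.det • (1 : Matrix (Fin Γ) (Fin Γ) ℝ) ∧
    (M.det ≠ 0 → M⁻¹ = (M.det)⁻¹ • H) :=
  stmt_5_general Γ K p₁ π M H hM hH
end

section
/- Let A₂ > 0, B₂ > 0, Δ > 0, 0 ≤ T, and set ρ = √(A₂·Δ). Define φ : ℝ → ℝ by φ(t) = −(ρ/Δ) · [e^{−ρ(T−t)}(−B₂Δ + ρ) − e^{ρ(T−t)}(B₂Δ + ρ)] / [e^{−ρ(T−t)}(−B₂Δ + ρ) + e^{ρ(T−t)}(B₂Δ + ρ)] − B₂. Then φ(T) = 0 and for every t ∈ [0,T] the function φ is differentiable at t with φ'(t) − Δ·φ(t)² − 2B₂Δ·φ(t) + A₂ − B₂²·Δ = 0. -/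
/-!
With `ρ = √(A₂ Δ)`, put `u(t) = e^{-ρ(T-t)}(ρ - B₂Δ)` and `v(t) = e^{ρ(T-t)}(ρ + B₂Δ)`, so that
`u' = ρ u`, `v' = -ρ v`. Then `q = (u - v)/(u + v)` satisfies the logistic equation `q' = ρ (1 - q²)`,
hence `ψ = -(ρ/Δ) q = φ + B₂` satisfies the scalar Riccati equation `ψ' = Δ ψ² - A₂`, which is the
claimed equation for `φ`. At `t = T`, `q = -B₂Δ/ρ`, so `ψ(T) = B₂`. The denominator
`u + v = 2ρ cosh(ρ(T-t)) + 2B₂Δ sinh(ρ(T-t))` is positive for `t ≤ T`.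
-/

open Set Real

theorem hasDerivAt_exp_mul_sub_mul (k T c t : ℝ) :
    HasDerivAt (fun s => exp (k * (T - s)) * c) (-k * (exp (k * (T - t)) * c)) t := by
  have hlin : HasDerivAt (fun s => k * (T - s)) (-k) t := by
    simpa using ((hasDerivAt_id t).const_sub T).const_mul k
  exact (hlin.exp.mul_const c).congr_deriv (by ring)

theorem hasDerivAt_sub_div_add {u v : ℝ → ℝ} {ρ t : ℝ} (hu : HasDerivAt u (ρ * u t) t)
    (hv : HasDerivAt v (-ρ * v t) t) (hne : u t + v t ≠ 0) :
    HasDerivAt (fun s => (u s - v s) / (u s + v s))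
      (ρ * (1 - ((u t - v t) / (u t + v t)) ^ 2)) t := by
  refine ((hu.sub hv).div (hu.add hv) hne).congr_deriv ?_
  simp only [Pi.add_apply, Pi.sub_apply]
  field_simp
  ring

theorem exp_neg_mul_mul_add_exp_mul_mul_pos {ρ c s : ℝ} (hρ : 0 < ρ) (hc : 0 ≤ c) (hs : 0 ≤ s) :
    0 < exp (-ρ * s) * (-c + ρ) + exp (ρ * s) * (c + ρ) := by
  have hle : exp (-ρ * s) ≤ exp (ρ * s) := exp_le_exp.2 (by nlinarith)
  nlinarith [mul_nonneg hc (sub_nonneg.2 hle), mul_pos hρ (exp_pos (-ρ * s)),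
    mul_pos hρ (exp_pos (ρ * s))]

theorem stmt_19_general (A₂ B₂ Δ T : ℝ) (hA₂ : 0 < A₂) (hB₂ : 0 < B₂) (hΔ : 0 < Δ)
    (ρ : ℝ) (hρ : ρ = Real.sqrt (A₂ * Δ))
    (φ : ℝ → ℝ)
    (hφ : ∀ t, φ t = -(ρ / Δ) *
      ((Real.exp (-ρ * (T - t)) * (-B₂ * Δ + ρ) - Real.exp (ρ * (T - t)) * (B₂ * Δ + ρ)) /
       (Real.exp (-ρ * (T - t)) * (-B₂ * Δ + ρ) + Real.exp (ρ * (T - t)) * (B₂ * Δ + ρ)))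
      - B₂) :
    φ T = 0 ∧
    ∀ t ∈ Icc 0 T, ∃ φ' : ℝ, HasDerivAt φ φ' t ∧
      φ' - Δ * (φ t) ^ 2 - 2 * B₂ * Δ * φ t + A₂ - B₂ ^ 2 * Δ = 0 := by
  have hρ_pos : 0 < ρ := hρ ▸ sqrt_pos.2 (mul_pos hA₂ hΔ)
  have hρ_ne : ρ ≠ 0 := hρ_pos.ne'
  have hρ_sq : ρ ^ 2 = A₂ * Δ := hρ ▸ sq_sqrt (mul_pos hA₂ hΔ).le
  set u : ℝ → ℝ := fun s => exp (-ρ * (T - s)) * (-B₂ * Δ + ρ)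
  set v : ℝ → ℝ := fun s => exp (ρ * (T - s)) * (B₂ * Δ + ρ)
  set q : ℝ → ℝ := fun s => (u s - v s) / (u s + v s)
  have hφ_eq : φ = fun s => -(ρ / Δ) * q s - B₂ := funext hφ
  refine ⟨?_, fun t ht => ?_⟩
  · rw [hφ T]
    simp only [sub_self, mul_zero, exp_zero, one_mul]
    rw [show -B₂ * Δ + ρ + (B₂ * Δ + ρ) = 2 * ρ by ring]
    field_simp
    ring
  have hden : u t + v t ≠ 0 := by
    have := exp_neg_mul_mul_add_exp_mul_mul_pos hρ_pos (mul_pos hB₂ hΔ).le (sub_nonneg.2 ht.2)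
    simp only [u, v, neg_mul] at this ⊢
    exact this.ne'
  have hu : HasDerivAt u (ρ * u t) t := by
    simpa only [neg_neg] using hasDerivAt_exp_mul_sub_mul (-ρ) T (-B₂ * Δ + ρ) t
  have hq : HasDerivAt q (ρ * (1 - q t ^ 2)) t :=
    hasDerivAt_sub_div_add hu (hasDerivAt_exp_mul_sub_mul ρ T (B₂ * Δ + ρ) t) hden
  refine ⟨_, hφ_eq ▸ (hq.const_mul (-(ρ / Δ))).sub_const B₂, ?_⟩
  rw [congrFun hφ_eq t]
  generalize q t = r
  field_simp
  linear_combination -hρ_sq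

theorem stmt_19 (A₂ B₂ Δ T : ℝ) (hA₂ : 0 < A₂) (hB₂ : 0 < B₂) (hΔ : 0 < Δ)
    (hT : 0 ≤ T) (ρ : ℝ) (hρ : ρ = Real.sqrt (A₂ * Δ))
    (φ : ℝ → ℝ)
    (hφ : ∀ t, φ t = -(ρ / Δ) *
      ((Real.exp (-ρ * (T - t)) * (-B₂ * Δ + ρ) - Real.exp (ρ * (T - t)) * (B₂ * Δ + ρ)) /
       (Real.exp (-ρ * (T - t)) * (-B₂ * Δ + ρ) + Real.exp (ρ * (T - t)) * (B₂ * Δ + ρ)))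
      - B₂) :
    φ T = 0 ∧
    ∀ t ∈ Icc 0 T, ∃ φ' : ℝ, HasDerivAt φ φ' t ∧
      φ' - Δ * (φ t) ^ 2 - 2 * B₂ * Δ * φ t + A₂ - B₂ ^ 2 * Δ = 0 :=
  stmt_19_general A₂ B₂ Δ T hA₂ hB₂ hΔ ρ hρ φ hφ
end
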